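/- arXiv:math/0604332 — 4 statements merged into one kernel-verified Lean document; each statement's English description precedes it below -/
import Mathlib

section
/- Let O, O' be points in ℝ³ and r, r' > 0. The squared quadratic Wasserstein distance W₂² between the uniform probability distribution on the sphere of center O and radius r and the uniform probability distribution on the sphere of center O' and radius r' is at most |O' - O|² + (r' - r)². -/
open MeasureTheory

noncomputable section

abbrev E3 := EuclideanSpace ℝ (Fin 3)

/-- Squared quadratic Wasserstein distance, as infimum over couplings. -/
def W2sq {E : Type*} [NormedAddCommGroup E] {mE : MeasurableSpace E}
    (μ ν : Measure E) : ℝ :=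
  sInf {x : ℝ | ∃ π : Measure (E × E),
    π.map Prod.fst = μ ∧ π.map Prod.snd = ν ∧ x = ∫ p, ‖p.1 - p.2‖ ^ 2 ∂π}

/-- Uniform (normalized 2-dimensional Hausdorff) probability distribution
on the sphere of center `O` and radius `r` in `ℝ³`. -/
def uniformOnSphere (O : E3) (r : ℝ) : Measure E3 :=
  ((Measure.hausdorffMeasure (d := 2) (Metric.sphere O r))⁻¹) •
    (Measure.hausdorffMeasure (d := 2)).restrict (Metric.sphere O r)

open ProbabilityTheory
open scoped RealInnerProductSpace ENNReal NNReal

/-! The similarity `v ↦ (r'/r) • (v - O) + O'` maps the first sphere onto the second and scales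
the 2-dimensional Hausdorff measure by a constant, so it pushes one uniform distribution to the
other and defines a coupling. Its cost `‖(1 - r'/r) • (v - O) - (O' - O)‖²` equals
`(r - r')² + ‖O' - O‖² - 2 (1 - r'/r) ⟪O' - O, v - O⟫` on the sphere, and the last term averages
to zero because the uniform distribution is invariant under the point reflection through `O`.
Being a normalized restriction, the uniform distribution has total mass `0` or `1`, so the area
of the sphere is never needed. -/

theorem W2sq_le_integral_of_map_eq {E : Type*} [NormedAddCommGroup E] [MeasurableSpace E]
    [OpensMeasurableSpace E] [SecondCountableTopology E] {μ ν : Measure E} {T : E → E}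
    (hT : Measurable T) (hTμ : μ.map T = ν) : W2sq μ ν ≤ ∫ v, ‖v - T v‖ ^ 2 ∂μ := by
  have hgraph : Measurable fun v => (v, T v) := measurable_id.prodMk hT
  refine csInf_le ⟨0, ?_⟩ ⟨μ.map fun v => (v, T v), ?_, ?_, ?_⟩
  · rintro x ⟨π, -, -, rfl⟩
    exact integral_nonneg fun p => by positivity
  · rw [Measure.map_map measurable_fst hgraph]
    exact Measure.map_id
  · rwa [Measure.map_map measurable_snd hgraph]
  · rw [integral_map hgraph.aemeasurable (by fun_prop : Continuous fun p : E × E =>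
      ‖p.1 - p.2‖ ^ 2).aestronglyMeasurable]

namespace ProbabilityTheory

variable {α β : Type*} [MeasurableSpace α] [MeasurableSpace β]

theorem cond_smul_measure (μ : Measure α) {k : ℝ≥0} (hk : k ≠ 0) (s : Set α) :
    (k • μ)[|s] = μ[|s] := by
  have hk' : (k : ℝ≥0∞) ≠ 0 := by exact_mod_cast hk
  simp only [cond, Measure.smul_apply, Measure.restrict_smul, smul_smul, ENNReal.smul_def,
    smul_eq_mul]
  rw [ENNReal.mul_inv (Or.inl hk') (Or.inl ENNReal.coe_ne_top), mul_comm (k : ℝ≥0∞)⁻¹, mul_assoc,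
    ENNReal.inv_mul_cancel hk' ENNReal.coe_ne_top, mul_one]

theorem map_cond_preimage (μ : Measure α) {f : α → β} (hf : Measurable f) {s : Set β}
    (hs : MeasurableSet s) : (μ[|f ⁻¹' s]).map f = (μ.map f)[|s] := by
  rw [cond, cond, Measure.map_smul, ← Measure.restrict_map hf hs, Measure.map_apply hf hs]

end ProbabilityTheory

section Similarity

variable {E : Type*} [NormedAddCommGroup E] [NormedSpace ℝ E]

theorem preimage_smul_sub_add_sphere (O O' : E) {c : ℝ} (hc : c ≠ 0) (r : ℝ) :
    (fun v => c • (v - O) + O') ⁻¹' Metric.sphere O' (|c| * r) = Metric.sphere O r := by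
  ext v
  simp [mem_sphere_iff_norm, norm_smul, hc]

theorem map_smul_sub_add_hausdorffMeasure [MeasurableSpace E] [BorelSpace E] {d : ℝ}
    (hd : 0 ≤ d) (O O' : E) {c : ℝ} (hc : c ≠ 0) :
    (μH[d] : Measure E).map (fun v => c • (v - O) + O') = ‖c‖₊⁻¹ ^ d • μH[d] := by
  have hT : (fun v => c • (v - O) + O') =
      IsometryEquiv.addRight (O' - O) ∘ AffineMap.homothety O c := by
    ext1 v
    simp only [Function.comp_apply, IsometryEquiv.addRight_apply, AffineMap.homothety_apply,
      vsub_eq_sub, vadd_eq_add]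
    abel
  rw [hT, ← Measure.map_map (IsometryEquiv.addRight _).continuous.measurable
    (AffineMap.homothety_continuous O c).measurable, map_homothety_hausdorffMeasure hd O hc,
    Measure.map_smul, IsometryEquiv.map_hausdorffMeasure]

end Similarity

theorem uniformOnSphere_eq_cond (O : E3) (r : ℝ) :
    uniformOnSphere O r = (μH[2] : Measure E3)[|Metric.sphere O r] := rfl

instance (O : E3) (r : ℝ) : IsZeroOrProbabilityMeasure (uniformOnSphere O r) := by
  rw [uniformOnSphere_eq_cond]
  infer_instance

theorem ae_uniformOnSphere_norm_sub_eq (O : E3) (r : ℝ) :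
    ∀ᵐ v ∂uniformOnSphere O r, ‖v - O‖ = r :=
  (ae_cond_mem Metric.isClosed_sphere.measurableSet).mono fun _ => mem_sphere_iff_norm.mp

theorem uniformOnSphere_map_smul_sub_add (O O' : E3) (r : ℝ) {c : ℝ} (hc : c ≠ 0) :
    (uniformOnSphere O r).map (fun v => c • (v - O) + O') = uniformOnSphere O' (|c| * r) := by
  have hk : ‖c‖₊⁻¹ ^ (2 : ℝ) ≠ 0 := (NNReal.rpow_pos (inv_pos.mpr (nnnorm_pos.mpr hc))).ne'
  rw [uniformOnSphere_eq_cond, ← preimage_smul_sub_add_sphere O O' hc,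
    map_cond_preimage _ (by fun_prop) Metric.isClosed_sphere.measurableSet,
    map_smul_sub_add_hausdorffMeasure zero_le_two O O' hc, cond_smul_measure _ hk,
    uniformOnSphere_eq_cond]

theorem integral_uniformOnSphere_sub_center (O : E3) (r : ℝ) :
    ∫ v, (v - O) ∂uniformOnSphere O r = 0 := by
  -- the point reflection through `O`
  have hsymm := uniformOnSphere_map_smul_sub_add O O r (c := -1) (by norm_num)
  rw [abs_neg, abs_one, one_mul] at hsymm
  have hodd : ∫ v, (v - O) ∂uniformOnSphere O r = -∫ v, (v - O) ∂uniformOnSphere O r := by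
    conv_lhs => rw [← hsymm]
    rw [integral_map (by fun_prop) (by fun_prop), ← integral_neg]
    simp
  rw [eq_neg_iff_add_eq_zero, ← two_smul ℝ] at hodd
  exact (smul_eq_zero.mp hodd).resolve_left two_ne_zero

section Cost

variable {E : Type*} [NormedAddCommGroup E] [InnerProductSpace ℝ E] [CompleteSpace E]
  [MeasurableSpace E] [OpensMeasurableSpace E] [SecondCountableTopology E]

theorem integral_norm_sub_smul_sub_add_sq {μ : Measure E} [IsFiniteMeasure μ] {O : E} {r : ℝ}
    (hr : ∀ᵐ v ∂μ, ‖v - O‖ = r) (hmean : ∫ v, (v - O) ∂μ = 0) (O' : E) (c : ℝ) :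
    ∫ v, ‖v - (c • (v - O) + O')‖ ^ 2 ∂μ =
      (‖O' - O‖ ^ 2 + (1 - c) ^ 2 * r ^ 2) * μ.real Set.univ := by
  have hint : Integrable (fun v => v - O) μ :=
    Integrable.of_bound (by fun_prop) r (hr.mono fun _ hv => hv.le)
  have hexpand : ∀ᵐ v ∂μ, ‖v - (c • (v - O) + O')‖ ^ 2 =
      (‖O' - O‖ ^ 2 + (1 - c) ^ 2 * r ^ 2) - 2 * (1 - c) * ⟪O' - O, v - O⟫ := by
    refine hr.mono fun v hv => ?_
    rw [show v - (c • (v - O) + O') = (1 - c) • (v - O) - (O' - O) by module, norm_sub_sq_real,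
      norm_smul, real_inner_smul_left, hv, real_inner_comm, Real.norm_eq_abs, mul_pow, sq_abs]
    ring
  rw [integral_congr_ae hexpand,
    integral_sub (integrable_const _) ((hint.const_inner _).const_mul _), integral_const,
    integral_const_mul, integral_inner hint, hmean, inner_zero_right]
  simp [mul_comm]

end Cost

theorem w2sq_uniformOnSphere_le (O O' : E3) (r r' : ℝ) (hr : 0 < r) (hr' : 0 < r') :
    W2sq (uniformOnSphere O r) (uniformOnSphere O' r') ≤ ‖O' - O‖ ^ 2 + (r' - r) ^ 2 := by
  set c := r' / r
  have hc : c ≠ 0 := div_ne_zero hr'.ne' hr.ne'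
  have hcr : |c| * r = r' := by rw [abs_of_pos (div_pos hr' hr), div_mul_cancel₀ _ hr.ne']
  have hmap := uniformOnSphere_map_smul_sub_add O O' r hc
  rw [hcr] at hmap
  calc W2sq (uniformOnSphere O r) (uniformOnSphere O' r')
      ≤ ∫ v, ‖v - (c • (v - O) + O')‖ ^ 2 ∂uniformOnSphere O r :=
        W2sq_le_integral_of_map_eq (by fun_prop) hmap
    _ = (‖O' - O‖ ^ 2 + (1 - c) ^ 2 * r ^ 2) * (uniformOnSphere O r).real Set.univ :=
        integral_norm_sub_smul_sub_add_sq (ae_uniformOnSphere_norm_sub_eq O r)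
          (integral_uniformOnSphere_sub_center O r) O' c
    _ ≤ ‖O' - O‖ ^ 2 + (1 - c) ^ 2 * r ^ 2 :=
        mul_le_of_le_one_right (by positivity) measureReal_le_one
    _ = ‖O' - O‖ ^ 2 + (r' - r) ^ 2 := by
        simp only [c]
        field_simp
        ring

end
end

section
/- Let v, w, x, y ∈ ℝ³, let 0 < e ≤ 1, set a = v − x and b = w − y. Let c_{v,w} = (v+w)/2 + ((1−e)/4)(v−w) and r_{v,w} = ((1+e)/4)|v−w|, and similarly for (x,y). Then |c_{v,w} − c_{x,y}|² + |r_{v,w} − r_{x,y}|² ≤ ((5 − 2e + e²)/8)|a|² + ((1+e)²/8)|b|² + ((1−e²)/4)(a·b). -/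
open scoped RealInnerProductSpace

noncomputable section

theorem center_radius_estimate (v w x y : E3) (e : ℝ) (he0 : 0 < e) (he1 : e ≤ 1) :
    let a := v - x
    let b := w - y
    let c := fun (v w : E3) => (1 / 2 : ℝ) • (v + w) + ((1 - e) / 4) • (v - w)
    let r := fun (v w : E3) => ((1 + e) / 4) * ‖v - w‖
    ‖c v w - c x y‖ ^ 2 + |r v w - r x y| ^ 2 ≤
      ((5 - 2 * e + e ^ 2) / 8) * ‖a‖ ^ 2 + ((1 + e) ^ 2 / 8) * ‖b‖ ^ 2
        + ((1 - e ^ 2) / 4) * ⟪a, b⟫ := by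
  intro a b c r
  have hc : c v w - c x y = ((3 - e) / 4) • a + ((1 + e) / 4) • b := by
    simp only [a, b, c]
    module
  have hn : ‖c v w - c x y‖ ^ 2 =
      ((3 - e) / 4) ^ 2 * ‖a‖ ^ 2 + 2 * (((3 - e) / 4) * ((1 + e) / 4)) * ⟪a, b⟫
        + ((1 + e) / 4) ^ 2 * ‖b‖ ^ 2 := by
    rw [hc, @norm_add_sq_real, real_inner_smul_left, real_inner_smul_right,
      norm_smul, norm_smul, mul_pow, mul_pow]
    rw [Real.norm_eq_abs, Real.norm_eq_abs,
      abs_of_nonneg (show (0:ℝ) ≤ (3 - e) / 4 by linarith),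
      abs_of_nonneg (show (0:ℝ) ≤ (1 + e) / 4 by linarith)]
    ring
  have hrle : |r v w - r x y| ≤ ((1 + e) / 4) * ‖a - b‖ := by
    have h1 : r v w - r x y = ((1 + e) / 4) * (‖v - w‖ - ‖x - y‖) := by
      simp only [r]; ring
    rw [h1, abs_mul, abs_of_nonneg (by linarith : (0:ℝ) ≤ (1 + e) / 4)]
    have h2 : |‖v - w‖ - ‖x - y‖| ≤ ‖(v - w) - (x - y)‖ := abs_norm_sub_norm_le _ _
    have h3 : (v - w) - (x - y) = a - b := by simp only [a, b]; abel
    rw [h3] at h2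
    exact mul_le_mul_of_nonneg_left h2 (by linarith)
  have hsq : |r v w - r x y| ^ 2 ≤ ((1 + e) / 4) ^ 2 * ‖a - b‖ ^ 2 := by
    have := mul_self_le_mul_self (abs_nonneg _) hrle
    calc |r v w - r x y| ^ 2 = |r v w - r x y| * |r v w - r x y| := sq _
      _ ≤ (((1 + e) / 4) * ‖a - b‖) * (((1 + e) / 4) * ‖a - b‖) := this
      _ = ((1 + e) / 4) ^ 2 * ‖a - b‖ ^ 2 := by ring
  have hab : ‖a - b‖ ^ 2 = ‖a‖ ^ 2 - 2 * ⟪a, b⟫ + ‖b‖ ^ 2 := norm_sub_sq_real a b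
  rw [hab] at hsq
  nlinarith [hsq, hn]

end
end

section
/- Let (v, w) and (x, y) be nonzero vectors in ℝ², let r = √(v² + w²), r' = √(x² + y²), and let T : ℝ² → ℝ² be the linear map T(a,b) = (r'/r)(a cos ω − b sin ω, a sin ω + b cos ω), where ω is the angle between (v,w) and (x,y). Then for all (a,b) ∈ ℝ², |T(a,b) − (a,b)|² = ((|v−x|² + |w−y|²)/(v² + w²)) (a² + b²). -/
theorem kac_rotation_dilation_identity (v w x y : ℝ)
    (hvw : (v, w) ≠ (0, 0)) (hxy : (x, y) ≠ (0, 0))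
    (ω : ℝ)
    (hcos : Real.cos ω = (v * x + w * y) / (Real.sqrt (v ^ 2 + w ^ 2) * Real.sqrt (x ^ 2 + y ^ 2)))
    (hsin : Real.sin ω = (v * y - w * x) / (Real.sqrt (v ^ 2 + w ^ 2) * Real.sqrt (x ^ 2 + y ^ 2)))
    (a b : ℝ) :
    let r := Real.sqrt (v ^ 2 + w ^ 2)
    let r' := Real.sqrt (x ^ 2 + y ^ 2)
    ((r' / r) * (a * Real.cos ω - b * Real.sin ω) - a) ^ 2
        + ((r' / r) * (a * Real.sin ω + b * Real.cos ω) - b) ^ 2 =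
      (((v - x) ^ 2 + (w - y) ^ 2) / (v ^ 2 + w ^ 2)) * (a ^ 2 + b ^ 2) := by
  intro r r'
  have hs : (0:ℝ) < v ^ 2 + w ^ 2 := by
    rcases (Prod.mk.injEq .. ▸ hvw : ¬(v = 0 ∧ w = 0)) with h
    by_contra hle
    push_neg at hle
    have hv : v = 0 := by nlinarith [sq_nonneg v, sq_nonneg w]
    have hw : w = 0 := by nlinarith [sq_nonneg v, sq_nonneg w]
    exact h ⟨hv, hw⟩
  have ht : (0:ℝ) < x ^ 2 + y ^ 2 := by
    rcases (Prod.mk.injEq .. ▸ hxy : ¬(x = 0 ∧ y = 0)) with h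
    by_contra hle
    push_neg at hle
    have hv : x = 0 := by nlinarith [sq_nonneg x, sq_nonneg y]
    have hw : y = 0 := by nlinarith [sq_nonneg x, sq_nonneg y]
    exact h ⟨hv, hw⟩
  have hr : 0 < r := Real.sqrt_pos.2 hs
  have hr' : 0 < r' := Real.sqrt_pos.2 ht
  have hr2 : r ^ 2 = v ^ 2 + w ^ 2 := Real.sq_sqrt hs.le
  have hr'2 : r' ^ 2 = x ^ 2 + y ^ 2 := Real.sq_sqrt ht.le
  have key : ∀ X : ℝ, r' / r * (X / (r * r')) = X / (v ^ 2 + w ^ 2) := by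
    intro X
    rw [← hr2]
    field_simp
  rw [hcos, hsin]
  show ((r' / r) * (a * ((v * x + w * y) / (r * r')) - b * ((v * y - w * x) / (r * r'))) - a) ^ 2
      + ((r' / r) * (a * ((v * y - w * x) / (r * r')) + b * ((v * x + w * y) / (r * r'))) - b) ^ 2
      = (((v - x) ^ 2 + (w - y) ^ 2) / (v ^ 2 + w ^ 2)) * (a ^ 2 + b ^ 2)
  have e1 : r' / r * (a * ((v * x + w * y) / (r * r')) - b * ((v * y - w * x) / (r * r')))
      = (a * (v * x + w * y) - b * (v * y - w * x)) / (v ^ 2 + w ^ 2) := by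
    rw [← key]; ring
  have e2 : r' / r * (a * ((v * y - w * x) / (r * r')) + b * ((v * x + w * y) / (r * r')))
      = (a * (v * y - w * x) + b * (v * x + w * y)) / (v ^ 2 + w ^ 2) := by
    rw [← key]; ring
  rw [e1, e2]
  field_simp
  ring
end

section
/- Let g be a Borel probability measure on ℝ³ with zero mean velocity and finite fourth moment. Let m₄ = ∫|v|⁴ dg(v), m₂ = ∫|v|² dg(v), and m̄₂² = ∫∫ (v·w)² dg(v) dg(w). Then with u = (v+w)/2 and U = (v−w)/2: ∫∫ |U|⁴ dg(v) dg(w) = (1/8)(m₄ + m₂² + 2 m̄₂²), ∫∫ |u|²|U|² dg(v) dg(w) = (1/8)(m₄ + m₂² − 2 m̄₂²), and ∫∫ (u·U)² dg(v) dg(w) = (1/8)(m₄ − m₂²). -/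
open MeasureTheory
open scoped RealInnerProductSpace

noncomputable section

lemma aux_comb (μ : Measure E3) [IsProbabilityMeasure μ]
    (f1 f2 f3 f4 f5 : E3 → ℝ) (a0 a1 a2 a3 a4 a5 : ℝ)
    (h1 : Integrable f1 μ) (h2 : Integrable f2 μ) (h3 : Integrable f3 μ)
    (h4 : Integrable f4 μ) (h5 : Integrable f5 μ) :
    ∫ x, (a0 + a1 * f1 x + a2 * f2 x + a3 * f3 x + a4 * f4 x + a5 * f5 x) ∂μ
      = a0 + a1 * ∫ x, f1 x ∂μ + a2 * ∫ x, f2 x ∂μ + a3 * ∫ x, f3 x ∂μ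
        + a4 * ∫ x, f4 x ∂μ + a5 * ∫ x, f5 x ∂μ := by
  have H1 : Integrable (fun x => a0 + a1 * f1 x) μ := (integrable_const a0).add (h1.const_mul a1)
  have H2 : Integrable (fun x => a0 + a1 * f1 x + a2 * f2 x) μ := H1.add (h2.const_mul a2)
  have H3 : Integrable (fun x => a0 + a1 * f1 x + a2 * f2 x + a3 * f3 x) μ := H2.add (h3.const_mul a3)
  have H4 : Integrable (fun x => a0 + a1 * f1 x + a2 * f2 x + a3 * f3 x + a4 * f4 x) μ := H3.add (h4.const_mul a4)
  rw [integral_add H4 (h5.const_mul a5), integral_add H3 (h4.const_mul a4),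
      integral_add H2 (h3.const_mul a3), integral_add H1 (h2.const_mul a2),
      integral_add (integrable_const a0) (h1.const_mul a1),
      integral_const, integral_const_mul, integral_const_mul, integral_const_mul,
      integral_const_mul, integral_const_mul]
  simp

theorem moment_identities (g : Measure E3) [IsProbabilityMeasure g]
    (hmean : ∫ v, v ∂g = 0)
    (h4 : Integrable (fun v => ‖v‖ ^ 4) g) :
    let m₄ := ∫ v, ‖v‖ ^ 4 ∂g
    let m₂ := ∫ v, ‖v‖ ^ 2 ∂g
    let mb := ∫ v, ∫ w, ⟪v, w⟫ ^ 2 ∂g ∂g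
    (∫ v, ∫ w, ‖(1 / 2 : ℝ) • (v - w)‖ ^ 4 ∂g ∂g = (1 / 8) * (m₄ + m₂ ^ 2 + 2 * mb)) ∧
    (∫ v, ∫ w, ‖(1 / 2 : ℝ) • (v + w)‖ ^ 2 * ‖(1 / 2 : ℝ) • (v - w)‖ ^ 2 ∂g ∂g =
        (1 / 8) * (m₄ + m₂ ^ 2 - 2 * mb)) ∧
    (∫ v, ∫ w, ⟪(1 / 2 : ℝ) • (v + w), (1 / 2 : ℝ) • (v - w)⟫ ^ 2 ∂g ∂g =
        (1 / 8) * (m₄ - m₂ ^ 2)) := by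
  intro m₄ m₂ mb
  -- pointwise bounds and integrability of norm powers
  have hb : ∀ (k : ℕ), k ≤ 4 → ∀ v : E3, ‖v‖ ^ k ≤ ‖v‖ ^ 4 + 1 := by
    intro k hk v
    rcases le_total (‖v‖) 1 with h | h
    · have h1 : ‖v‖ ^ k ≤ 1 := pow_le_one₀ (norm_nonneg v) h
      have h2 : (0:ℝ) ≤ ‖v‖ ^ 4 := pow_nonneg (norm_nonneg v) 4
      linarith
    · have h1 : ‖v‖ ^ k ≤ ‖v‖ ^ 4 := pow_le_pow_right₀ h hk
      linarith
  have hpow : ∀ (k : ℕ), k ≤ 4 → Integrable (fun v : E3 => ‖v‖ ^ k) g := by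
    intro k hk
    refine (h4.add (integrable_const 1)).mono'
      ((continuous_norm.pow k).aestronglyMeasurable) ?_
    filter_upwards with v
    rw [Real.norm_eq_abs, abs_of_nonneg (pow_nonneg (norm_nonneg v) k)]
    exact hb k hk v
  have hid : Integrable (fun v : E3 => v) g := by
    refine (h4.add (integrable_const 1)).mono' aestronglyMeasurable_id ?_
    filter_upwards with v
    simpa using hb 1 (by norm_num) v
  have hc3 : Integrable (fun w : E3 => ‖w‖ ^ 2 • w) g := by
    refine (h4.add (integrable_const 1)).mono'
      (((continuous_norm.pow 2).smul continuous_id).aestronglyMeasurable) ?_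
    filter_upwards with w
    rw [norm_smul, Real.norm_eq_abs, abs_of_nonneg (pow_nonneg (norm_nonneg w) 2)]
    calc ‖w‖ ^ 2 * ‖w‖ = ‖w‖ ^ 3 := by ring
    _ ≤ ‖w‖ ^ 4 + 1 := hb 3 (by norm_num) w
  set c : E3 := ∫ w, ‖w‖ ^ 2 • w ∂g with hc
  set D : E3 → ℝ := fun v => ∫ w, ⟪v, w⟫ ^ 2 ∂g with hDdef
  -- basic inner-integral evaluations
  have hI3 : ∀ v : E3, ∫ w, ⟪v, w⟫ ∂g = 0 := by
    intro v
    rw [integral_inner hid, hmean]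
    simp
  have hI5 : ∀ v : E3, ∫ w, ‖w‖ ^ 2 * ⟪v, w⟫ ∂g = ⟪v, c⟫ := by
    intro v
    have e : ∀ w : E3, ‖w‖ ^ 2 * ⟪v, w⟫ = ⟪v, ‖w‖ ^ 2 • w⟫ := by
      intro w; rw [real_inner_smul_right]
    simp_rw [e]
    rw [integral_inner hc3]
  -- integrability of the various fixed-v integrands in w
  have hinner1 : ∀ v : E3, Integrable (fun w : E3 => ⟪v, w⟫) g := by
    intro v
    refine ((hpow 1 (by norm_num)).const_mul ‖v‖).mono'
      ((continuous_const.inner continuous_id).aestronglyMeasurable) ?_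
    filter_upwards with w
    rw [Real.norm_eq_abs]
    calc |⟪v, w⟫| ≤ ‖v‖ * ‖w‖ := abs_real_inner_le_norm v w
    _ = ‖v‖ * ‖w‖ ^ 1 := by ring
  have hinner2 : ∀ v : E3, Integrable (fun w : E3 => ⟪v, w⟫ ^ 2) g := by
    intro v
    refine ((hpow 2 (by norm_num)).const_mul (‖v‖ ^ 2)).mono'
      (((continuous_const.inner continuous_id).pow 2).aestronglyMeasurable) ?_
    filter_upwards with w
    rw [Real.norm_eq_abs, abs_of_nonneg (sq_nonneg _)]
    calc ⟪v, w⟫ ^ 2 = |⟪v, w⟫| ^ 2 := (sq_abs _).symm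
    _ ≤ (‖v‖ * ‖w‖) ^ 2 := by
          have := abs_real_inner_le_norm v w
          have h0 : (0:ℝ) ≤ |⟪v, w⟫| := abs_nonneg _
          nlinarith
    _ = ‖v‖ ^ 2 * ‖w‖ ^ 2 := by ring
  have hinner5 : ∀ v : E3, Integrable (fun w : E3 => ‖w‖ ^ 2 * ⟪v, w⟫) g := by
    intro v
    refine ((hpow 3 (by norm_num)).const_mul ‖v‖).mono'
      (((continuous_norm.pow 2).mul (continuous_const.inner continuous_id)).aestronglyMeasurable) ?_
    filter_upwards with w
    rw [Real.norm_eq_abs, abs_mul, abs_of_nonneg (pow_nonneg (norm_nonneg w) 2)]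
    calc ‖w‖ ^ 2 * |⟪v, w⟫| ≤ ‖w‖ ^ 2 * (‖v‖ * ‖w‖) := by
          have := abs_real_inner_le_norm v w
          have h0 : (0:ℝ) ≤ ‖w‖ ^ 2 := pow_nonneg (norm_nonneg w) 2
          nlinarith
    _ = ‖v‖ * ‖w‖ ^ 3 := by ring
  -- properties of D
  have hDbound : ∀ v : E3, ‖D v‖ ≤ m₂ * ‖v‖ ^ 2 := by
    intro v
    have h0 : 0 ≤ D v := integral_nonneg fun w => sq_nonneg _
    rw [Real.norm_eq_abs, abs_of_nonneg h0]
    have hle : D v ≤ ∫ w, ‖v‖ ^ 2 * ‖w‖ ^ 2 ∂g := by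
      refine integral_mono (hinner2 v) ((hpow 2 (by norm_num)).const_mul _) ?_
      intro w
      calc ⟪v, w⟫ ^ 2 = |⟪v, w⟫| ^ 2 := (sq_abs _).symm
      _ ≤ (‖v‖ * ‖w‖) ^ 2 := by
            have := abs_real_inner_le_norm v w
            have h0' : (0:ℝ) ≤ |⟪v, w⟫| := abs_nonneg _
            nlinarith
      _ = ‖v‖ ^ 2 * ‖w‖ ^ 2 := by ring
    calc D v ≤ ∫ w, ‖v‖ ^ 2 * ‖w‖ ^ 2 ∂g := hle
    _ = ‖v‖ ^ 2 * m₂ := integral_const_mul _ _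
    _ = m₂ * ‖v‖ ^ 2 := by ring
  have hDmeas : AEStronglyMeasurable D g := by
    have hcont : Continuous fun p : E3 × E3 => ⟪p.1, p.2⟫ ^ 2 :=
      (continuous_fst.inner continuous_snd).pow 2
    exact (hcont.stronglyMeasurable.integral_prod_right').aestronglyMeasurable
  have hDint : Integrable D g := by
    refine ((hpow 2 (by norm_num)).const_mul m₂).mono' hDmeas ?_
    filter_upwards with v
    exact hDbound v
  have hmb : ∫ v, D v ∂g = mb := rfl
  have hIc : Integrable (fun v : E3 => ⟪v, c⟫) g := by
    refine ((hpow 1 (by norm_num)).const_mul ‖c‖).mono'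
      ((continuous_id.inner continuous_const).aestronglyMeasurable) ?_
    filter_upwards with v
    rw [Real.norm_eq_abs]
    calc |⟪v, c⟫| ≤ ‖v‖ * ‖c‖ := abs_real_inner_le_norm v c
    _ = ‖c‖ * ‖v‖ ^ 1 := by ring
  have houtc : ∫ v, ⟪v, c⟫ ∂g = 0 := by
    have e : ∀ v : E3, ⟪v, c⟫ = ⟪c, v⟫ := fun v => real_inner_comm c v
    simp_rw [e]
    rw [integral_inner hid, hmean]
    simp
  have hm4 : ∫ v, ‖v‖ ^ 4 ∂g = m₄ := rfl
  have hm2 : ∫ v, ‖v‖ ^ 2 ∂g = m₂ := rfl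
  refine ⟨?_, ?_, ?_⟩
  -- first identity
  · have expand : ∀ v w : E3, ‖(1 / 2 : ℝ) • (v - w)‖ ^ 4
        = (1/16) * ‖v‖ ^ 4 + (1/16) * ‖w‖ ^ 4 + ((1/8) * ‖v‖ ^ 2) * ‖w‖ ^ 2
          + (-((1/4) * ‖v‖ ^ 2)) * ⟪v, w⟫ + (1/4) * ⟪v, w⟫ ^ 2
          + (-(1/4)) * (‖w‖ ^ 2 * ⟪v, w⟫) := by
      intro v w
      have h1 : ‖(1 / 2 : ℝ) • (v - w)‖ ^ 4 = (1/16) * (‖v - w‖ ^ 2) ^ 2 := by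
        rw [norm_smul, Real.norm_eq_abs, abs_of_pos (by norm_num : (0:ℝ) < 1/2)]
        ring
      have h2 : ‖v - w‖ ^ 2 = ‖v‖ ^ 2 - 2 * ⟪v, w⟫ + ‖w‖ ^ 2 := norm_sub_sq_real v w
      rw [h1, h2]; ring
    have inner1 : ∀ v : E3, ∫ w, ‖(1 / 2 : ℝ) • (v - w)‖ ^ 4 ∂g
        = (1/16) * m₄ + (1/16) * ‖v‖ ^ 4 + ((1/8) * m₂) * ‖v‖ ^ 2
          + (1/4) * D v + (-(1/4)) * ⟪v, c⟫ + 0 * D v := by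
      intro v
      simp only [expand]
      refine (aux_comb g (fun w => ‖w‖ ^ 4) (fun w => ‖w‖ ^ 2) (fun w => ⟪v, w⟫)
        (fun w => ⟪v, w⟫ ^ 2) (fun w => ‖w‖ ^ 2 * ⟪v, w⟫)
        ((1/16) * ‖v‖ ^ 4) (1/16) ((1/8) * ‖v‖ ^ 2) (-((1/4) * ‖v‖ ^ 2)) (1/4) (-(1/4))
        (hpow 4 (by norm_num)) (hpow 2 (by norm_num)) (hinner1 v) (hinner2 v)
        (hinner5 v)).trans ?_
      rw [hI3 v, hI5 v, hm4, hm2]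
      ring
    simp only [inner1]
    refine (aux_comb g (fun v => ‖v‖ ^ 4) (fun v => ‖v‖ ^ 2) D (fun v => ⟪v, c⟫) D
      ((1/16) * m₄) (1/16) ((1/8) * m₂) (1/4) (-(1/4)) 0
      (hpow 4 (by norm_num)) (hpow 2 (by norm_num)) hDint hIc hDint).trans ?_
    rw [hm4, hm2, hmb, houtc]
    ring
  -- second identity
  · have expand : ∀ v w : E3, ‖(1 / 2 : ℝ) • (v + w)‖ ^ 2 * ‖(1 / 2 : ℝ) • (v - w)‖ ^ 2
        = (1/16) * ‖v‖ ^ 4 + (1/16) * ‖w‖ ^ 4 + ((1/8) * ‖v‖ ^ 2) * ‖w‖ ^ 2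
          + 0 * ⟪v, w⟫ + (-(1/4)) * ⟪v, w⟫ ^ 2 + 0 * (‖w‖ ^ 2 * ⟪v, w⟫) := by
      intro v w
      have ha : ‖(1 / 2 : ℝ) • (v + w)‖ ^ 2 = (1/4) * ‖v + w‖ ^ 2 := by
        rw [norm_smul, Real.norm_eq_abs, abs_of_pos (by norm_num : (0:ℝ) < 1/2)]
        ring
      have hs : ‖(1 / 2 : ℝ) • (v - w)‖ ^ 2 = (1/4) * ‖v - w‖ ^ 2 := by
        rw [norm_smul, Real.norm_eq_abs, abs_of_pos (by norm_num : (0:ℝ) < 1/2)]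
        ring
      have h2 : ‖v - w‖ ^ 2 = ‖v‖ ^ 2 - 2 * ⟪v, w⟫ + ‖w‖ ^ 2 := norm_sub_sq_real v w
      have h3 : ‖v + w‖ ^ 2 = ‖v‖ ^ 2 + 2 * ⟪v, w⟫ + ‖w‖ ^ 2 := norm_add_sq_real v w
      rw [ha, hs, h2, h3]; ring
    have inner2 : ∀ v : E3, ∫ w, ‖(1 / 2 : ℝ) • (v + w)‖ ^ 2 * ‖(1 / 2 : ℝ) • (v - w)‖ ^ 2 ∂g
        = (1/16) * m₄ + (1/16) * ‖v‖ ^ 4 + ((1/8) * m₂) * ‖v‖ ^ 2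
          + (-(1/4)) * D v + 0 * ⟪v, c⟫ + 0 * D v := by
      intro v
      simp only [expand]
      refine (aux_comb g (fun w => ‖w‖ ^ 4) (fun w => ‖w‖ ^ 2) (fun w => ⟪v, w⟫)
        (fun w => ⟪v, w⟫ ^ 2) (fun w => ‖w‖ ^ 2 * ⟪v, w⟫)
        ((1/16) * ‖v‖ ^ 4) (1/16) ((1/8) * ‖v‖ ^ 2) 0 (-(1/4)) 0
        (hpow 4 (by norm_num)) (hpow 2 (by norm_num)) (hinner1 v) (hinner2 v)
        (hinner5 v)).trans ?_
      rw [hI3 v, hI5 v, hm4, hm2]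
      ring
    simp only [inner2]
    refine (aux_comb g (fun v => ‖v‖ ^ 4) (fun v => ‖v‖ ^ 2) D (fun v => ⟪v, c⟫) D
      ((1/16) * m₄) (1/16) ((1/8) * m₂) (-(1/4)) 0 0
      (hpow 4 (by norm_num)) (hpow 2 (by norm_num)) hDint hIc hDint).trans ?_
    rw [hm4, hm2, hmb, houtc]
    ring
  -- third identity
  · have expand : ∀ v w : E3, ⟪(1 / 2 : ℝ) • (v + w), (1 / 2 : ℝ) • (v - w)⟫ ^ 2
        = (1/16) * ‖v‖ ^ 4 + (1/16) * ‖w‖ ^ 4 + ((-(1/8)) * ‖v‖ ^ 2) * ‖w‖ ^ 2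
          + 0 * ⟪v, w⟫ + 0 * ⟪v, w⟫ ^ 2 + 0 * (‖w‖ ^ 2 * ⟪v, w⟫) := by
      intro v w
      have hinner : ⟪(1 / 2 : ℝ) • (v + w), (1 / 2 : ℝ) • (v - w)⟫
          = (1/4) * (‖v‖ ^ 2 - ‖w‖ ^ 2) := by
        rw [real_inner_smul_left, real_inner_smul_right, inner_sub_right, inner_add_left,
          inner_add_left, real_inner_comm w v, real_inner_self_eq_norm_sq,
          real_inner_self_eq_norm_sq]
        ring
      rw [hinner]; ring
    have inner3 : ∀ v : E3, ∫ w, ⟪(1 / 2 : ℝ) • (v + w), (1 / 2 : ℝ) • (v - w)⟫ ^ 2 ∂g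
        = (1/16) * m₄ + (1/16) * ‖v‖ ^ 4 + ((-(1/8)) * m₂) * ‖v‖ ^ 2
          + 0 * D v + 0 * ⟪v, c⟫ + 0 * D v := by
      intro v
      simp only [expand]
      refine (aux_comb g (fun w => ‖w‖ ^ 4) (fun w => ‖w‖ ^ 2) (fun w => ⟪v, w⟫)
        (fun w => ⟪v, w⟫ ^ 2) (fun w => ‖w‖ ^ 2 * ⟪v, w⟫)
        ((1/16) * ‖v‖ ^ 4) (1/16) ((-(1/8)) * ‖v‖ ^ 2) 0 0 0
        (hpow 4 (by norm_num)) (hpow 2 (by norm_num)) (hinner1 v) (hinner2 v)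
        (hinner5 v)).trans ?_
      rw [hI3 v, hI5 v, hm4, hm2]
      ring
    simp only [inner3]
    refine (aux_comb g (fun v => ‖v‖ ^ 4) (fun v => ‖v‖ ^ 2) D (fun v => ⟪v, c⟫) D
      ((1/16) * m₄) (1/16) ((-(1/8)) * m₂) 0 0 0
      (hpow 4 (by norm_num)) (hpow 2 (by norm_num)) hDint hIc hDint).trans ?_
    rw [hm4, hm2, hmb, houtc]
    ring

end
end
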